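/- arXiv:1702.06680 — 7 statements merged into one kernel-verified Lean document; each statement's English description precedes it below -/
import Mathlib

section
/- For every nonzero y ∈ ℝ³, the series Σ_{k=0}^∞ S(y)^k/(k+1)! converges and equals J_r(−y) = I₃ + ((1 − cos‖y‖)/‖y‖²)·S(y) + ((‖y‖ − sin‖y‖)/‖y‖³)·S(y)². -/
open Matrix

/-- `S y` is the skew-symmetric matrix with `S y *ᵥ x = y ×₃ x` (cross-product matrix). -/
def S (y : EuclideanSpace ℝ (Fin 3)) : Matrix (Fin 3) (Fin 3) ℝ :=
  !![0, -y 2, y 1; y 2, 0, -y 0; -y 1, y 0, 0]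

/-- The right Jacobian `J_r(y) = I − ((1−cos‖y‖)/‖y‖²)·S(y) + ((‖y‖−sin‖y‖)/‖y‖³)·S(y)²`. -/
noncomputable def Jr (y : EuclideanSpace ℝ (Fin 3)) : Matrix (Fin 3) (Fin 3) ℝ :=
  1 - ((1 - Real.cos ‖y‖) / ‖y‖ ^ 2) • S y + ((‖y‖ - Real.sin ‖y‖) / ‖y‖ ^ 3) • (S y ^ 2)

lemma norm_sq_eq (y : EuclideanSpace ℝ (Fin 3)) : ‖y‖ ^ 2 = y 0 ^ 2 + y 1 ^ 2 + y 2 ^ 2 := by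
  rw [EuclideanSpace.norm_eq, Real.sq_sqrt (by positivity)]
  simp [Fin.sum_univ_three, Real.norm_eq_abs, sq_abs]

lemma S_cube (y : EuclideanSpace ℝ (Fin 3)) : S y ^ 3 = (-‖y‖ ^ 2) • S y := by
  rw [norm_sq_eq, pow_succ, pow_two]
  ext i j
  fin_cases i <;> fin_cases j <;>
    simp [S, Matrix.mul_apply, Fin.sum_univ_three] <;> ring

lemma S_pow_odd (y : EuclideanSpace ℝ (Fin 3)) (m : ℕ) :
    S y ^ (2 * m + 1) = ((-1 : ℝ) ^ m * ‖y‖ ^ (2 * m)) • S y := by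
  induction m with
  | zero => simp
  | succ m ih =>
    have h : 2 * (m + 1) + 1 = (2 * m + 1) + 2 := by ring
    rw [h, pow_add, ih, Matrix.smul_mul, ← pow_succ', S_cube, smul_smul]
    congr 1
    ring

lemma S_pow_even (y : EuclideanSpace ℝ (Fin 3)) (m : ℕ) :
    S y ^ (2 * m + 2) = ((-1 : ℝ) ^ m * ‖y‖ ^ (2 * m)) • S y ^ 2 := by
  have h : 2 * m + 2 = (2 * m + 1) + 1 := by ring
  rw [h, pow_succ, S_pow_odd, Matrix.smul_mul, ← pow_two]

lemma hasSum_cosCoeff (t : ℝ) (ht : t ≠ 0) :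
    HasSum (fun m : ℕ => (-1 : ℝ) ^ m * t ^ (2 * m) / ((2 * m + 2).factorial))
      ((1 - Real.cos t) / t ^ 2) := by
  have ht2 : (-t ^ 2) ≠ 0 := by simpa using pow_ne_zero 2 ht
  have h1 : HasSum (fun n : ℕ => (-1 : ℝ) ^ (n + 1) * t ^ (2 * (n + 1)) / ((2 * (n + 1)).factorial))
      (Real.cos t - 1) := by
    have := (hasSum_nat_add_iff
      (f := fun n : ℕ => (-1 : ℝ) ^ n * t ^ (2 * n) / ((2 * n).factorial)) 1
      (g := Real.cos t - 1)).mpr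
    simpa using this (by simpa using Real.hasSum_cos t)
  have h2 : HasSum (fun n : ℕ => (-t ^ 2) * ((-1 : ℝ) ^ n * t ^ (2 * n) / ((2 * n + 2).factorial)))
      (Real.cos t - 1) := by
    convert h1 using 2 with n
    have h : 2 * (n + 1) = 2 * n + 2 := by ring
    rw [h]; ring
  have h3 := h2.mul_left (-t ^ 2)⁻¹
  have h4 : (fun n : ℕ => (-t ^ 2)⁻¹ * ((-t ^ 2) * ((-1 : ℝ) ^ n * t ^ (2 * n) / ((2 * n + 2).factorial))))
      = fun n : ℕ => (-1 : ℝ) ^ n * t ^ (2 * n) / ((2 * n + 2).factorial) := by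
    funext n; field_simp
  rw [h4] at h3
  convert h3 using 1
  · rfl
  field_simp
  ring

lemma hasSum_sinCoeff (t : ℝ) (ht : t ≠ 0) :
    HasSum (fun m : ℕ => (-1 : ℝ) ^ m * t ^ (2 * m) / ((2 * m + 3).factorial))
      ((t - Real.sin t) / t ^ 3) := by
  have ht2 : (-t ^ 3) ≠ 0 := by simpa using pow_ne_zero 3 ht
  have h1 : HasSum (fun n : ℕ => (-1 : ℝ) ^ (n + 1) * t ^ (2 * (n + 1) + 1) / ((2 * (n + 1) + 1).factorial))
      (Real.sin t - t) := by
    have := (hasSum_nat_add_iff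
      (f := fun n : ℕ => (-1 : ℝ) ^ n * t ^ (2 * n + 1) / ((2 * n + 1).factorial)) 1
      (g := Real.sin t - t)).mpr
    simpa using this (by simpa using Real.hasSum_sin t)
  have h2 : HasSum (fun n : ℕ => (-t ^ 3) * ((-1 : ℝ) ^ n * t ^ (2 * n) / ((2 * n + 3).factorial)))
      (Real.sin t - t) := by
    convert h1 using 2 with n
    have h : 2 * (n + 1) + 1 = 2 * n + 3 := by ring
    rw [h]; ring
  have h3 := h2.mul_left (-t ^ 3)⁻¹
  have h4 : (fun n : ℕ => (-t ^ 3)⁻¹ * ((-t ^ 3) * ((-1 : ℝ) ^ n * t ^ (2 * n) / ((2 * n + 3).factorial))))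
      = fun n : ℕ => (-1 : ℝ) ^ n * t ^ (2 * n) / ((2 * n + 3).factorial) := by
    funext n; field_simp
  rw [h4] at h3
  convert h3 using 1
  · rfl
  field_simp
  ring

lemma S_neg (y : EuclideanSpace ℝ (Fin 3)) : S (-y) = -S y := by
  ext i j
  fin_cases i <;> fin_cases j <;> simp [S]

/-- For every nonzero `y ∈ ℝ³`, the series `Σ_{k=0}^∞ S(y)^k/(k+1)!` converges and equals
`J_r(−y) = I + ((1 − cos‖y‖)/‖y‖²)·S(y) + ((‖y‖ − sin‖y‖)/‖y‖³)·S(y)²`. -/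
theorem hasSum_Jr_neg (y : EuclideanSpace ℝ (Fin 3)) (hy : y ≠ 0) :
    HasSum (fun k : ℕ => (((k + 1).factorial : ℝ))⁻¹ • S y ^ k) (Jr (-y)) ∧
      Jr (-y) = 1 + ((1 - Real.cos ‖y‖) / ‖y‖ ^ 2) • S y
          + ((‖y‖ - Real.sin ‖y‖) / ‖y‖ ^ 3) • (S y ^ 2) := by
  have hJ : Jr (-y) = 1 + ((1 - Real.cos ‖y‖) / ‖y‖ ^ 2) • S y
      + ((‖y‖ - Real.sin ‖y‖) / ‖y‖ ^ 3) • (S y ^ 2) := by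
    rw [Jr, norm_neg, S_neg]
    simp [sub_eq_add_neg]
  refine ⟨?_, hJ⟩
  set t := ‖y‖ with htdef
  have ht : t ≠ 0 := norm_ne_zero_iff.mpr hy
  set g : ℕ → Matrix (Fin 3) (Fin 3) ℝ :=
    fun k => (((k + 1).factorial : ℝ))⁻¹ • S y ^ k with hg
  -- odd part
  have hodd : HasSum (fun m => g (2 * m + 1)) (((1 - Real.cos t) / t ^ 2) • S y) := by
    have h := (hasSum_cosCoeff t ht).smul_const (S y)
    convert h using 2 with m
    rw [hg]
    simp only
    rw [S_pow_odd, smul_smul]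
    congr 1
    have : 2 * m + 1 + 1 = 2 * m + 2 := by ring
    rw [this]
    field_simp
    rfl
  -- even part
  have hevenshift : HasSum (fun m => g (2 * (m + 1))) (((t - Real.sin t) / t ^ 3) • S y ^ 2) := by
    have h := (hasSum_sinCoeff t ht).smul_const (S y ^ 2)
    convert h using 2 with m
    rw [hg]
    simp only
    have h1 : 2 * (m + 1) = 2 * m + 2 := by ring
    rw [h1, S_pow_even, smul_smul]
    congr 1
    have h2 : 2 * m + 2 + 1 = 2 * m + 3 := by ring
    rw [h2]
    field_simp
    rfl
  have heven : HasSum (fun m => g (2 * m))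
      ((((t - Real.sin t) / t ^ 3) • S y ^ 2) + 1) := by
    have := (hasSum_nat_add_iff (f := fun m => g (2 * m)) 1
      (g := ((t - Real.sin t) / t ^ 3) • S y ^ 2)).mp ?_
    · simpa [hg] using this
    · exact hevenshift
  have hsum := heven.even_add_odd hodd
  convert hsum using 1
  rw [hJ]
  abel
end

section
/- Let N ∈ ℕ, R ∈ SO(3), P a symmetric (3N+6)×(3N+6) real matrix, and Ψ a positive definite 3×3 real matrix. Set L = P·M_N and W = M_Nᵀ·P·M_N, let H be the 3×(3N+9) real matrix with block columns [Rᵀ M_Nᵀ, −Rᵀ], define P₁ = fromBlocks(P, L; Lᵀ, RΨRᵀ + W), and recursively P_{k+1} = (I − K_k H)·P_k with K_k = P_k Hᵀ (H P_k Hᵀ + Ψ)^{-1}. Then for every k ≥ 1: (i) P_k = fromBlocks(P, L; Lᵀ, (1/k)·RΨRᵀ + W); (ii) H P_k Hᵀ + Ψ = ((k+1)/k)·Ψ, which is invertible; and (iii) K_k has top block 0_{(3N+6)×3} and bottom block −(1/(k+1))·R. (Theorem 1: a stationary robot repeatedly observing one new landmark leaves the estimate of robot pose and old landmarks unchanged and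 the covariance has this closed form.) -/
open Matrix

/-- `M_N` is the `(3N+6)×3` block matrix `(0₃; I₃; 0_{3N,3})` whose second `3×3` block is
the identity. -/
def MN (N : ℕ) : Matrix (Fin (3 * N + 6)) (Fin 3) ℝ :=
  fun i j => if (i : ℕ) = (j : ℕ) + 3 then 1 else 0

/-- Theorem 1 of the paper: a robot stationary at A, repeatedly observing one new landmark
`k` times.  With `H = [Rᵀ M_Nᵀ, −Rᵀ]`, `P₁ = fromBlocks P L Lᵀ (RΨRᵀ + W)` and the Kalman
recursion `P_{k+1} = (I − K_k H) P_k`, `K_k = P_k Hᵀ (H P_k Hᵀ + Ψ)⁻¹`, one has for all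
`k ≥ 1`: (i) `P_k = fromBlocks P L Lᵀ ((1/k)·RΨRᵀ + W)`; (ii) `H P_k Hᵀ + Ψ = ((k+1)/k)·Ψ`
is invertible; (iii) `K_k` has top block `0` and bottom block `−(1/(k+1))·R`. -/
theorem riekf_stationary_new_landmark (N : ℕ)
    (R : Matrix (Fin 3) (Fin 3) ℝ) (hR : Rᵀ * R = 1 ∧ R.det = 1)
    (P : Matrix (Fin (3 * N + 6)) (Fin (3 * N + 6)) ℝ) (hP : Pᵀ = P)
    (Ψ : Matrix (Fin 3) (Fin 3) ℝ) (hΨ : Ψ.PosDef)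
    (L : Matrix (Fin (3 * N + 6)) (Fin 3) ℝ) (hL : L = P * MN N)
    (W : Matrix (Fin 3) (Fin 3) ℝ) (hW : W = (MN N)ᵀ * P * MN N)
    (H : Matrix (Fin 3) (Fin (3 * N + 6) ⊕ Fin 3) ℝ)
    (hH : H = Matrix.fromCols (Rᵀ * (MN N)ᵀ) (-Rᵀ))
    (Pk : ℕ → Matrix (Fin (3 * N + 6) ⊕ Fin 3) (Fin (3 * N + 6) ⊕ Fin 3) ℝ)
    (hP1 : Pk 1 = Matrix.fromBlocks P L Lᵀ (R * Ψ * Rᵀ + W))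
    (K : ℕ → Matrix (Fin (3 * N + 6) ⊕ Fin 3) (Fin 3) ℝ)
    (hK : ∀ k, K k = Pk k * Hᵀ * (H * Pk k * Hᵀ + Ψ)⁻¹)
    (hrec : ∀ k, 1 ≤ k → Pk (k + 1) = (1 - K k * H) * Pk k) :
    ∀ k, 1 ≤ k →
      Pk k = Matrix.fromBlocks P L Lᵀ ((1 / (k : ℝ)) • (R * Ψ * Rᵀ) + W) ∧
      (H * Pk k * Hᵀ + Ψ = (((k : ℝ) + 1) / (k : ℝ)) • Ψ ∧ IsUnit (H * Pk k * Hᵀ + Ψ)) ∧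
      K k = Matrix.fromRows 0 ((-(1 / ((k : ℝ) + 1))) • R) := by
  obtain ⟨hRtR, hdet⟩ := hR
  have hRRt : R * Rᵀ = 1 := mul_eq_one_comm.mp hRtR
  have hΨd : IsUnit Ψ.det := isUnit_iff_ne_zero.mpr (ne_of_gt hΨ.det_pos)
  have hΨinv : Ψ * Ψ⁻¹ = 1 := Matrix.mul_nonsing_inv Ψ hΨd
  have hLt : Lᵀ = (MN N)ᵀ * P := by
    rw [hL, Matrix.transpose_mul, hP]
  have hHt : Hᵀ = Matrix.fromRows (MN N * R) (-R) := by
    rw [hH, Matrix.transpose_fromCols, Matrix.transpose_mul, Matrix.transpose_transpose,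
      Matrix.transpose_neg, Matrix.transpose_transpose]
  -- key computation 1 : Q c * Hᵀ
  have h1 : ∀ c : ℝ, (Matrix.fromBlocks P L Lᵀ (c • (R * Ψ * Rᵀ) + W)) * Hᵀ
      = Matrix.fromRows 0 ((-c) • (R * Ψ)) := by
    intro c
    have e0 : P * (MN N * R) + L * (-R) = 0 := by
      simp [hL, Matrix.mul_assoc]
    have e2 : Lᵀ * (MN N * R) + (c • (R * Ψ * Rᵀ) + W) * (-R) = (-c) • (R * Ψ) := by
      rw [hLt, hW, Matrix.mul_neg, Matrix.add_mul, Matrix.smul_mul,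
        Matrix.mul_assoc (R * Ψ) Rᵀ R, hRtR, Matrix.mul_one,
        ← Matrix.mul_assoc ((MN N)ᵀ * P) (MN N) R, neg_smul]
      abel
    rw [hHt, Matrix.fromBlocks_mul_fromRows, e0, e2]
  -- key computation 2 : H * (Q c * Hᵀ)
  have h2 : ∀ c : ℝ, H * (Matrix.fromRows 0 ((-c) • (R * Ψ)) : Matrix (Fin (3 * N + 6) ⊕ Fin 3) (Fin 3) ℝ) = c • Ψ := by
    intro c
    rw [hH, Matrix.fromCols_mul_fromRows, Matrix.mul_zero, zero_add, Matrix.mul_smul,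
      Matrix.neg_mul, ← Matrix.mul_assoc, hRtR, Matrix.one_mul,
      smul_neg, neg_smul, neg_neg]
  -- inverse of (c+1) • Ψ
  have h3 : ∀ c : ℝ, c + 1 ≠ 0 → ((c + 1) • Ψ)⁻¹ = (c + 1)⁻¹ • Ψ⁻¹ := by
    intro c hc
    apply Matrix.inv_eq_right_inv
    rw [Matrix.smul_mul, Matrix.mul_smul, hΨinv, smul_smul, mul_inv_cancel₀ hc, one_smul]
  -- the generic one-step facts
  have aux : ∀ c : ℝ, 0 < c → ∀ k : ℕ,
      Pk k = Matrix.fromBlocks P L Lᵀ (c • (R * Ψ * Rᵀ) + W) →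
      (H * Pk k * Hᵀ + Ψ = (c + 1) • Ψ) ∧
      K k = Matrix.fromRows 0 ((-(c / (c + 1))) • R) := by
    intro c hc k hPkc
    have hc1 : c + 1 ≠ 0 := by positivity
    have hPH : Pk k * Hᵀ = Matrix.fromRows 0 ((-c) • (R * Ψ)) := by
      rw [hPkc]; exact h1 c
    have hS : H * Pk k * Hᵀ + Ψ = (c + 1) • Ψ := by
      rw [Matrix.mul_assoc, hPH, h2, add_smul, one_smul]
    refine ⟨hS, ?_⟩
    rw [hK, hS, h3 c hc1, hPH, Matrix.fromRows_mul, Matrix.zero_mul,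
      Matrix.smul_mul, Matrix.mul_smul, smul_smul, Matrix.mul_assoc, hΨinv, Matrix.mul_one]
    congr 2
    rw [div_eq_mul_inv]; ring
  -- main invariant, by induction
  have main : ∀ k, 1 ≤ k →
      Pk k = Matrix.fromBlocks P L Lᵀ ((1 / (k : ℝ)) • (R * Ψ * Rᵀ) + W) := by
    intro k hk
    induction k, hk using Nat.le_induction with
    | base => simpa using hP1
    | succ n hn ih =>
      have hn0 : (n : ℝ) ≠ 0 := Nat.cast_ne_zero.mpr (by omega)
      have hn0' : (0:ℝ) < (n : ℝ) := by positivity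
      set c : ℝ := 1 / (n : ℝ) with hc
      have hcpos : 0 < c := by rw [hc]; positivity
      have hc1 : c + 1 ≠ 0 := by positivity
      obtain ⟨hS, hKn⟩ := aux c hcpos n ih
      have hKH : K n * H = Matrix.fromBlocks 0 0 (-((c / (c + 1)) • (MN N)ᵀ))
          ((c / (c + 1)) • (1 : Matrix (Fin 3) (Fin 3) ℝ)) := by
        rw [hKn, hH, Matrix.fromRows_mul_fromCols, Matrix.zero_mul, Matrix.zero_mul,
          Matrix.smul_mul, Matrix.smul_mul, neg_smul, neg_smul, ← Matrix.mul_assoc, hRRt,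
          Matrix.one_mul, Matrix.mul_neg, hRRt, smul_neg, neg_neg]
      have key : Pk (n + 1) = Matrix.fromBlocks P L Lᵀ
          ((c * (1 - c / (c + 1))) • (R * Ψ * Rᵀ) + W) := by
        rw [hrec n hn, Matrix.sub_mul, Matrix.one_mul, ih, hKH,
          Matrix.fromBlocks_multiply, sub_eq_add_neg, Matrix.fromBlocks_neg,
          Matrix.fromBlocks_add]
        rw [Matrix.fromBlocks_inj]
        refine ⟨by simp, by simp, by simp [hLt, Matrix.smul_mul], ?_⟩
        simp only [Matrix.smul_mul, Matrix.one_mul, Matrix.neg_mul, hL,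
          ← Matrix.mul_assoc, ← hW]
        module
      rw [key]
      congr 2
      rw [hc]
      congr 1
      push_cast
      field_simp
      ring
  intro k hk
  have hk0 : (k : ℝ) ≠ 0 := Nat.cast_ne_zero.mpr (by omega)
  have hk0' : (0:ℝ) < (k:ℝ) := by positivity
  have hkc : (0:ℝ) < 1 / (k : ℝ) := by positivity
  obtain ⟨hS, hKk⟩ := aux (1 / (k:ℝ)) hkc k (main k hk)
  refine ⟨main k hk, ⟨?_, ?_⟩, ?_⟩
  · rw [hS]
    congr 1
    field_simp
    ring
  · rw [hS]
    refine (Matrix.isUnit_iff_isUnit_det _).mpr ?_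
    rw [Matrix.det_smul]
    exact (isUnit_iff_ne_zero.mpr (pow_ne_zero _ (by positivity))).mul hΨd
  · rw [hKk, show -((1:ℝ)/(k:ℝ)/(1/(k:ℝ)+1)) = -(1/((k:ℝ)+1)) from by
      rw [neg_inj, div_eq_div_iff (by positivity) (by positivity)]
      field_simp
      ring]
end

section
/- Under the hypotheses and recursion of Theorem 1 (R ∈ SO(3), P symmetric, Ψ positive definite, P_k defined by the Kalman recursion with H = [Rᵀ M_Nᵀ, −Rᵀ] and P₁ = fromBlocks(P, P M_N; M_Nᵀ P, RΨRᵀ + M_Nᵀ P M_N)), the sequence of covariance matrices converges entrywise as k → ∞ to P^A_∞ = fromBlocks(P, L; Lᵀ, W), where L = P·M_N and W = M_Nᵀ·P·M_N (equation (7) of the paper). -/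
open Matrix Filter

/-- Key algebraic step of the Kalman recursion. -/
lemma riekf_step (N : ℕ)
    (R : Matrix (Fin 3) (Fin 3) ℝ) (hRR : Rᵀ * R = 1)
    (P : Matrix (Fin (3 * N + 6)) (Fin (3 * N + 6)) ℝ) (hP : Pᵀ = P)
    (Ψ : Matrix (Fin 3) (Fin 3) ℝ) (hΨ : Ψ.PosDef)
    (c : ℝ) (hc : 0 < c) :
    let X := R * Ψ * Rᵀ
    let L := P * MN N
    let W := (MN N)ᵀ * P * MN N
    let H := Matrix.fromCols (Rᵀ * (MN N)ᵀ) (-Rᵀ)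
    let Q := Matrix.fromBlocks P L Lᵀ (c • X + W)
    (1 - (Q * Hᵀ * (H * Q * Hᵀ + Ψ)⁻¹) * H) * Q =
      Matrix.fromBlocks P L Lᵀ ((c / (1 + c)) • X + W) := by
  intro X L W H Q
  have hΨd : IsUnit Ψ.det := isUnit_iff_ne_zero.mpr hΨ.det_pos.ne'
  have hΨi : Ψ * Ψ⁻¹ = 1 := Matrix.mul_nonsing_inv Ψ hΨd
  have hLT : Lᵀ = (MN N)ᵀ * P := by
    simp [L, Matrix.transpose_mul, hP]
  have hHT : Hᵀ = Matrix.fromRows (MN N * R) (-R) := by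
    show (Matrix.fromCols (Rᵀ * (MN N)ᵀ) (-Rᵀ))ᵀ = _
    rw [Matrix.transpose_fromCols]
    simp [Matrix.transpose_mul]
  -- H * Q
  have e1 : Rᵀ * (MN N)ᵀ * P + (-Rᵀ) * Lᵀ = 0 := by
    rw [hLT, Matrix.neg_mul, Matrix.mul_assoc]
    exact add_neg_cancel _
  have e2 : Rᵀ * (MN N)ᵀ * L + (-Rᵀ) * (c • X + W) = -(c • (Ψ * Rᵀ)) := by
    have h1 : Rᵀ * (MN N)ᵀ * L = Rᵀ * W := by
      simp [L, W, Matrix.mul_assoc]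
    have hXR : Rᵀ * X = Ψ * Rᵀ := by
      simp only [X, ← Matrix.mul_assoc, hRR, Matrix.one_mul]
    have h2 : (-Rᵀ) * (c • X + W) = -(c • (Ψ * Rᵀ)) - Rᵀ * W := by
      rw [Matrix.neg_mul, Matrix.mul_add, Matrix.mul_smul, hXR]
      abel
    rw [h1, h2]
    abel
  have hHQ : H * Q = Matrix.fromCols 0 (-(c • (Ψ * Rᵀ))) := by
    show Matrix.fromCols (Rᵀ * (MN N)ᵀ) (-Rᵀ) * Matrix.fromBlocks P L Lᵀ (c • X + W) = _
    rw [Matrix.fromCols_mul_fromBlocks, e1, e2]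
  -- Q * Hᵀ
  have f1 : P * (MN N * R) + L * (-R) = 0 := by
    rw [Matrix.mul_neg, ← Matrix.mul_assoc]
    exact add_neg_cancel _
  have f2 : Lᵀ * (MN N * R) + (c • X + W) * (-R) = -(c • (R * Ψ)) := by
    have h1 : Lᵀ * (MN N * R) = W * R := by
      rw [hLT]
      simp [W, Matrix.mul_assoc]
    have hXR : X * R = R * Ψ := by
      simp only [X, Matrix.mul_assoc, hRR, Matrix.mul_one]
    have h2 : (c • X + W) * (-R) = -(c • (R * Ψ)) - W * R := by
      rw [Matrix.mul_neg, Matrix.add_mul, Matrix.smul_mul, hXR]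
      abel
    rw [h1, h2]
    abel
  have hQHT : Q * Hᵀ = Matrix.fromRows 0 (-(c • (R * Ψ))) := by
    rw [hHT]
    show Matrix.fromBlocks P L Lᵀ (c • X + W) * Matrix.fromRows (MN N * R) (-R) = _
    rw [Matrix.fromBlocks_mul_fromRows, f1, f2]
  -- H * Q * Hᵀ
  have hHQHT : H * Q * Hᵀ = c • Ψ := by
    rw [hHQ, hHT, Matrix.fromCols_mul_fromRows]
    rw [Matrix.zero_mul, Matrix.neg_mul, Matrix.mul_neg, neg_neg, zero_add,
      Matrix.smul_mul, Matrix.mul_assoc, hRR, Matrix.mul_one]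
  -- innovation covariance and its inverse
  have hS : H * Q * Hᵀ + Ψ = (1 + c) • Ψ := by
    rw [hHQHT, add_smul, one_smul, add_comm]
  have h1c : (0:ℝ) < 1 + c := by linarith
  have hSinv : (H * Q * Hᵀ + Ψ)⁻¹ = (1 + c)⁻¹ • Ψ⁻¹ := by
    rw [hS]
    apply Matrix.inv_eq_right_inv
    rw [Matrix.smul_mul, Matrix.mul_smul, hΨi, smul_smul, mul_inv_cancel₀ h1c.ne', one_smul]
  -- gain
  have hKe : Q * Hᵀ * (H * Q * Hᵀ + Ψ)⁻¹ = Matrix.fromRows 0 (-((c / (1 + c)) • R)) := by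
    rw [hQHT, hSinv, Matrix.fromRows_mul, Matrix.zero_mul, Matrix.neg_mul, Matrix.smul_mul,
      Matrix.mul_smul, Matrix.mul_assoc, hΨi, Matrix.mul_one, smul_smul,
      ← div_eq_mul_inv]
  -- K * H * Q
  have hKHQ : (Q * Hᵀ * (H * Q * Hᵀ + Ψ)⁻¹) * (H * Q) =
      Matrix.fromBlocks 0 0 0 ((c * c / (1 + c)) • X) := by
    rw [hKe, hHQ, Matrix.fromRows_mul_fromCols, Matrix.mul_zero, Matrix.zero_mul,
      Matrix.mul_zero, Matrix.neg_mul, Matrix.mul_neg, neg_neg, Matrix.smul_mul,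
      Matrix.mul_smul, smul_smul]
    have hs : c / (1 + c) * c = c * c / (1 + c) := by ring
    have hm : R * (Ψ * Rᵀ) = X := (Matrix.mul_assoc R Ψ Rᵀ).symm
    rw [hs, hm]
  -- final assembly
  rw [Matrix.sub_mul, Matrix.one_mul, Matrix.mul_assoc _ H Q, hKHQ]
  show Matrix.fromBlocks P L Lᵀ (c • X + W) - _ = _
  have hblk : c • X + W - (c * c / (1 + c)) • X = (c / (1 + c)) • X + W := by
    have hs : c - c * c / (1 + c) = c / (1 + c) := by field_simp; ring
    rw [add_sub_right_comm, ← sub_smul, hs]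
  have hsub : Matrix.fromBlocks P L Lᵀ (c • X + W) -
      Matrix.fromBlocks (0 : Matrix (Fin (3*N+6)) (Fin (3*N+6)) ℝ) 0 0 ((c * c / (1 + c)) • X) =
      Matrix.fromBlocks (P - 0) (L - 0) (Lᵀ - 0) ((c • X + W) - (c * c / (1 + c)) • X) := by
    ext (i | i) (j | j) <;> simp [Matrix.fromBlocks]
  rw [hsub, sub_zero, sub_zero, sub_zero, hblk]

/-- Under the hypotheses and recursion of Theorem 1, the covariance matrices `P_k` converge
entrywise as `k → ∞` to `P^A_∞ = fromBlocks P L Lᵀ W` (equation (7) of the paper). -/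
theorem riekf_stationary_limit (N : ℕ)
    (R : Matrix (Fin 3) (Fin 3) ℝ) (hR : Rᵀ * R = 1 ∧ R.det = 1)
    (P : Matrix (Fin (3 * N + 6)) (Fin (3 * N + 6)) ℝ) (hP : Pᵀ = P)
    (Ψ : Matrix (Fin 3) (Fin 3) ℝ) (hΨ : Ψ.PosDef)
    (L : Matrix (Fin (3 * N + 6)) (Fin 3) ℝ) (hL : L = P * MN N)
    (W : Matrix (Fin 3) (Fin 3) ℝ) (hW : W = (MN N)ᵀ * P * MN N)
    (H : Matrix (Fin 3) (Fin (3 * N + 6) ⊕ Fin 3) ℝ)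
    (hH : H = Matrix.fromCols (Rᵀ * (MN N)ᵀ) (-Rᵀ))
    (Pk : ℕ → Matrix (Fin (3 * N + 6) ⊕ Fin 3) (Fin (3 * N + 6) ⊕ Fin 3) ℝ)
    (hP1 : Pk 1 = Matrix.fromBlocks P L Lᵀ (R * Ψ * Rᵀ + W))
    (K : ℕ → Matrix (Fin (3 * N + 6) ⊕ Fin 3) (Fin 3) ℝ)
    (hK : ∀ k, K k = Pk k * Hᵀ * (H * Pk k * Hᵀ + Ψ)⁻¹)
    (hrec : ∀ k, 1 ≤ k → Pk (k + 1) = (1 - K k * H) * Pk k) :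
    ∀ i j, Tendsto (fun k => Pk k i j) atTop (nhds (Matrix.fromBlocks P L Lᵀ W i j)) := by
  have key : ∀ k : ℕ, Pk (k + 1) =
      Matrix.fromBlocks P L Lᵀ ((((k : ℝ) + 1)⁻¹) • (R * Ψ * Rᵀ) + W) := by
    intro k
    induction k with
    | zero => simpa using hP1
    | succ n ih =>
      have hn1 : (1:ℕ) ≤ n + 1 := by omega
      have hc : (0:ℝ) < ((n : ℝ) + 1)⁻¹ := by positivity
      have step := riekf_step N R hR.1 P hP Ψ hΨ (((n : ℝ) + 1)⁻¹) hc
      simp only at step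
      have hceq : ((n : ℝ) + 1)⁻¹ / (1 + ((n : ℝ) + 1)⁻¹) = ((n : ℝ) + 1 + 1)⁻¹ := by
        have h0 : (0:ℝ) < (n : ℝ) + 1 := by positivity
        field_simp
      have hcast : (((n + 1 : ℕ) : ℝ) + 1) = ((n : ℝ) + 1 + 1) := by push_cast; ring
      rw [hrec (n + 1) hn1, hK (n + 1), ih, hH, hL, hW, hcast, step, hceq]
  intro i j
  have heq : ∀ k : ℕ, Pk (k + 1) i j =
      Matrix.fromBlocks P L Lᵀ W i j +
        (((k : ℝ) + 1)⁻¹) * (Matrix.fromBlocks 0 0 0 (R * Ψ * Rᵀ) i j) := by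
    intro k
    rw [key k]
    rcases i with i | i <;> rcases j with j | j <;>
      simp [Matrix.fromBlocks, Matrix.add_apply, Matrix.smul_apply, add_comm]
  have hlim : Tendsto (fun k : ℕ => Pk (k + 1) i j) atTop
      (nhds (Matrix.fromBlocks P L Lᵀ W i j)) := by
    simp only [heq]
    have h1 : Tendsto (fun k : ℕ => (((k : ℝ) + 1)⁻¹) *
        (Matrix.fromBlocks 0 0 0 (R * Ψ * Rᵀ) i j)) atTop (nhds 0) := by
      have := tendsto_one_div_add_atTop_nhds_zero_nat (𝕜 := ℝ)
      simpa [one_div] using this.mul_const (Matrix.fromBlocks 0 0 0 (R * Ψ * Rᵀ) i j)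
    simpa using tendsto_const_nhds.add h1
  exact (tendsto_add_atTop_iff_nat 1).mp hlim
end

section
/- Let N ∈ ℕ, m ≥ 1, R ∈ SO(3), P a symmetric (3N+6)×(3N+6) real matrix, and Ψ a positive definite 3×3 real matrix. Set n = 3N+6, L = P·M_N, W = M_Nᵀ·P·M_N. For k ≥ 1 let P_k be the (n+3m)×(n+3m) block matrix whose top-left n×n block is P, whose (top, landmark-i) block is L and (landmark-i, top) block is Lᵀ for each i = 1, …, m, and whose (landmark-i, landmark-j) 3×3 block equals W for i ≠ j and (1/k)·RΨRᵀ + W for i = j. Let H be the 3m×(n+3m) matrix whose i-th block row is [Rᵀ M_Nᵀ, 0, …, 0, −Rᵀ, 0, …, 0] with −Rᵀ in landmark block i, and let Ψ̄ be the 3m×3m block-diagonal matrix with m copies of Ψ. Then for every k ≥ 1: H P_k Hᵀ + Ψ̄ = ((k+1)/k)·Ψ̄, which is invertible, and (I − P_k Hᵀ (H P_k Hᵀ + Ψ̄)^{-1} H)·P_k = P_{k+1}. (Corollary 1: closed-form covariance for a stationary robot observing m new landmarks k times.) -/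
open Matrix

open Kronecker

section aux

variable {m : ℕ} {p : Type*} [Fintype p]

/-- block-diagonal matrix with `m` copies of `Q` -/
def bdm (m : ℕ) (Q : Matrix (Fin 3) (Fin 3) ℝ) : Matrix (Fin m × Fin 3) (Fin m × Fin 3) ℝ :=
  (1 : Matrix (Fin m) (Fin m) ℝ) ⊗ₖ Q

/-- stack of `m` identity matrices -/
def Em (m : ℕ) : Matrix (Fin m × Fin 3) (Fin 3) ℝ :=
  Matrix.of fun x j => if x.2 = j then (1:ℝ) else 0

lemma bdm_apply (Q : Matrix (Fin 3) (Fin 3) ℝ) (x y : Fin m × Fin 3) :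
    bdm m Q x y = if x.1 = y.1 then Q x.2 y.2 else 0 := by
  simp [bdm, one_apply, ite_mul]

lemma bdm_mul (Q Q' : Matrix (Fin 3) (Fin 3) ℝ) :
    bdm m Q * bdm m Q' = bdm m (Q * Q') := by
  rw [bdm, bdm, bdm, ← mul_kronecker_mul, one_mul]

lemma bdm_one : bdm m 1 = 1 := one_kronecker_one

lemma bdm_smul (c : ℝ) (Q : Matrix (Fin 3) (Fin 3) ℝ) :
    bdm m (c • Q) = c • bdm m Q := kronecker_smul c _ Q

lemma bdm_transpose (Q : Matrix (Fin 3) (Fin 3) ℝ) :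
    (bdm m Q)ᵀ = bdm m Qᵀ := by
  ext x y; simp [bdm_apply, transpose_apply, eq_comm]

lemma Em_mul (Q : Matrix (Fin 3) (Fin 3) ℝ) : Em m * Q = bdm m Q * Em m := by
  ext x j
  simp [Em, bdm_apply, mul_apply, Fintype.sum_prod_type, ite_mul, mul_ite]

lemma bdm_mul_Em (Q : Matrix (Fin 3) (Fin 3) ℝ) : bdm m Q * Em m = Em m * Q :=
  (Em_mul Q).symm

lemma Emt_mul_bdm (Q : Matrix (Fin 3) (Fin 3) ℝ) :
    (Em m)ᵀ * bdm m Q = Q * (Em m)ᵀ := by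
  have := congrArg Matrix.transpose (Em_mul (m := m) Qᵀ)
  simpa [transpose_mul, bdm_transpose] using this.symm

lemma bdm_mul_Em_assoc (Q : Matrix (Fin 3) (Fin 3) ℝ) (X : Matrix (Fin 3) p ℝ) :
    bdm m Q * (Em m * X) = Em m * (Q * X) := by
  rw [← Matrix.mul_assoc, bdm_mul_Em, Matrix.mul_assoc]

lemma Emt_mul_bdm_assoc (Q : Matrix (Fin 3) (Fin 3) ℝ) (X : Matrix (Fin m × Fin 3) p ℝ) :
    (Em m)ᵀ * (bdm m Q * X) = Q * ((Em m)ᵀ * X) := by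
  rw [← Matrix.mul_assoc, Emt_mul_bdm, Matrix.mul_assoc]

lemma bdm_mul_assoc (Q Q' : Matrix (Fin 3) (Fin 3) ℝ) (X : Matrix (Fin m × Fin 3) p ℝ) :
    bdm m Q * (bdm m Q' * X) = bdm m (Q * Q') * X := by
  rw [← Matrix.mul_assoc, bdm_mul]

lemma mul3_left {n1 n2 n3 : Type*} [Fintype n2] [Fintype n3]
    {A : Matrix n1 n2 ℝ} {B : Matrix n2 n3 ℝ} {C : Matrix n1 n3 ℝ} (h : A * B = C)
    (X : Matrix n3 p ℝ) : A * (B * X) = C * X := by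
  rw [← Matrix.mul_assoc, h]

end aux

/-- Corollary 1 of the paper: closed-form covariance for a stationary robot observing `m`
new landmarks `k` times.  Landmark blocks are indexed by `Fin m × Fin 3`.  For `k ≥ 1`,
`H P_k Hᵀ + Ψ̄ = ((k+1)/k)·Ψ̄` is invertible, and the Kalman update of `P_k` is `P_{k+1}`. -/
theorem riekf_stationary_m_landmarks (N m : ℕ) (hm : 1 ≤ m)
    (R : Matrix (Fin 3) (Fin 3) ℝ) (hR : Rᵀ * R = 1 ∧ R.det = 1)
    (P : Matrix (Fin (3 * N + 6)) (Fin (3 * N + 6)) ℝ) (hP : Pᵀ = P)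
    (Ψ : Matrix (Fin 3) (Fin 3) ℝ) (hΨ : Ψ.PosDef)
    (L : Matrix (Fin (3 * N + 6)) (Fin 3) ℝ) (hL : L = P * MN N)
    (W : Matrix (Fin 3) (Fin 3) ℝ) (hW : W = (MN N)ᵀ * P * MN N)
    (Pk : ℕ → Matrix (Fin (3 * N + 6) ⊕ (Fin m × Fin 3)) (Fin (3 * N + 6) ⊕ (Fin m × Fin 3)) ℝ)
    (hPk : ∀ k, Pk k = Matrix.fromBlocks P
        (Matrix.of fun i x => L i x.2)
        (Matrix.of fun x i => Lᵀ x.2 i)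
        (Matrix.of fun x y =>
          W x.2 y.2 + if x.1 = y.1 then ((1 / (k : ℝ)) • (R * Ψ * Rᵀ)) x.2 y.2 else 0))
    (H : Matrix (Fin m × Fin 3) (Fin (3 * N + 6) ⊕ (Fin m × Fin 3)) ℝ)
    (hH : H = Matrix.of fun x j =>
        Sum.elim (fun i => (Rᵀ * (MN N)ᵀ) x.2 i)
          (fun y => if x.1 = y.1 then (-Rᵀ) x.2 y.2 else 0) j)
    (Ψb : Matrix (Fin m × Fin 3) (Fin m × Fin 3) ℝ)
    (hΨb : Ψb = Matrix.of fun x y => if x.1 = y.1 then Ψ x.2 y.2 else 0) :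
    ∀ k, 1 ≤ k →
      H * Pk k * Hᵀ + Ψb = (((k : ℝ) + 1) / (k : ℝ)) • Ψb ∧
      IsUnit (H * Pk k * Hᵀ + Ψb) ∧
      (1 - Pk k * Hᵀ * (H * Pk k * Hᵀ + Ψb)⁻¹ * H) * Pk k = Pk (k + 1) := by
  intro k hk
  obtain ⟨hRtR, -⟩ := hR
  have hRRt : R * Rᵀ = 1 := mul_eq_one_comm.mp hRtR
  have hk0 : (k : ℝ) ≠ 0 := by
    have h1 : (1:ℝ) ≤ (k:ℝ) := by exact_mod_cast hk
    linarith
  have hk1 : (k : ℝ) + 1 ≠ 0 := by positivity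
  have hLt : Lᵀ = (MN N)ᵀ * P := by rw [hL, transpose_mul, hP]
  have hMNL : (MN N)ᵀ * L = W := by rw [hL, hW, Matrix.mul_assoc]
  have hLtMN : Lᵀ * MN N = W := by rw [hLt, hW]
  have hPMN : P * MN N = L := hL.symm
  have hdet : IsUnit Ψ.det := hΨ.det_pos.ne'.isUnit
  have hΨinv : Ψ * Ψ⁻¹ = 1 := mul_nonsing_inv Ψ hdet
  have hΨiΨ : Ψ⁻¹ * Ψ = 1 := nonsing_inv_mul Ψ hdet
  have hLE : (Matrix.of fun (i : Fin (3*N+6)) (x : Fin m × Fin 3) => L i x.2)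
      = L * (Em m)ᵀ := by
    ext i x
    simp [Em, mul_apply]
  have hEL : (Matrix.of fun (x : Fin m × Fin 3) (i : Fin (3*N+6)) => Lᵀ x.2 i)
      = Em m * Lᵀ := by
    ext x i
    simp [Em, mul_apply, ite_mul]
  have hD : ∀ j : ℕ, (Matrix.of fun x y : Fin m × Fin 3 =>
        W x.2 y.2 + if x.1 = y.1 then ((1 / (j : ℝ)) • (R * Ψ * Rᵀ)) x.2 y.2 else 0)
      = Em m * W * (Em m)ᵀ + (1 / (j:ℝ)) • bdm m (R * Ψ * Rᵀ) := by
    intro j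
    ext x y
    simp [Em, bdm_apply, mul_apply, Fintype.sum_prod_type, ite_mul, mul_ite]
  have hPk' : ∀ j : ℕ, Pk j = fromBlocks P (L * (Em m)ᵀ) (Em m * Lᵀ)
      (Em m * W * (Em m)ᵀ + (1/(j:ℝ)) • bdm m (R*Ψ*Rᵀ)) := by
    intro j
    rw [hPk j, hLE, hEL, hD j]
  have hH' : H = fromCols (Em m * (Rᵀ * (MN N)ᵀ)) (-(bdm m Rᵀ)) := by
    rw [hH]
    ext x (i|y)
    · simp [fromCols, mul_apply, Em, ite_mul, Matrix.mul_assoc]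
    · by_cases h : x.1 = y.1 <;> simp [fromCols, bdm_apply, h]
  have hΨb' : Ψb = bdm m Ψ := by
    rw [hΨb]; ext x y; simp [bdm_apply]
  have key1 : H * Pk k * Hᵀ = (1/(k:ℝ)) • bdm m Ψ := by
    rw [hH', hPk' k, transpose_fromCols, fromCols_mul_fromBlocks, fromCols_mul_fromRows]
    simp only [transpose_mul, transpose_transpose, transpose_neg, bdm_transpose,
      Matrix.add_mul, Matrix.mul_add, Matrix.neg_mul, Matrix.mul_neg, neg_neg,
      Matrix.smul_mul, Matrix.mul_smul, Matrix.mul_assoc,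
      mul3_left hPMN, mul3_left hMNL, mul3_left hLtMN, mul3_left hRtR, mul3_left hRRt,
      bdm_mul_Em_assoc, Emt_mul_bdm_assoc, bdm_mul_assoc, bdm_mul_Em, Emt_mul_bdm, bdm_mul,
      Matrix.one_mul, hRtR, mul_one, smul_neg, neg_neg]
    abel
  have key2 : H * Pk k * Hᵀ + Ψb = (((k:ℝ)+1)/(k:ℝ)) • Ψb := by
    rw [key1, hΨb']
    have hc : (((k:ℝ)+1)/(k:ℝ)) = 1/(k:ℝ) + 1 := by field_simp; ring
    rw [hc, add_smul, one_smul]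
  have hc1 : (((k:ℝ)+1)/(k:ℝ)) * ((k:ℝ)/((k:ℝ)+1)) = 1 := by field_simp
  have hmul : ((((k:ℝ)+1)/(k:ℝ)) • bdm m Ψ) * (((k:ℝ)/((k:ℝ)+1)) • bdm m Ψ⁻¹) = 1 := by
    rw [Matrix.smul_mul, Matrix.mul_smul, smul_smul, bdm_mul, hΨinv, bdm_one, hc1, one_smul]
  have hSinv : (H * Pk k * Hᵀ + Ψb)⁻¹ = ((k:ℝ)/((k:ℝ)+1)) • bdm m Ψ⁻¹ := by
    rw [key2, hΨb']
    exact inv_eq_right_inv hmul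
  refine ⟨key2, ?_, ?_⟩
  · rw [key2, hΨb']
    exact (Matrix.isUnit_iff_isUnit_det _).mpr (isUnit_det_of_right_inverse hmul)
  · rw [hSinv, hH', hPk' k, hPk' (k+1), Matrix.sub_mul, Matrix.one_mul]
    rw [transpose_fromCols, fromBlocks_mul_fromRows, Matrix.mul_smul, fromRows_mul,
      Matrix.smul_mul, fromRows_mul_fromCols, Matrix.smul_mul, fromBlocks_multiply]
    simp only [transpose_mul, transpose_transpose, transpose_neg, bdm_transpose,
      Matrix.add_mul, Matrix.mul_add, Matrix.neg_mul, Matrix.mul_neg, neg_neg,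
      Matrix.smul_mul, Matrix.mul_smul, Matrix.mul_assoc,
      mul3_left hPMN, mul3_left hMNL, mul3_left hLtMN, mul3_left hRtR, mul3_left hRRt,
      mul3_left hΨinv, mul3_left hΨiΨ,
      bdm_mul_Em_assoc, Emt_mul_bdm_assoc, bdm_mul_assoc, bdm_mul_Em, Emt_mul_bdm, bdm_mul,
      Matrix.one_mul, hRtR, mul_one, smul_neg, neg_neg, Nat.cast_add, Nat.cast_one, hLt]
    rw [fromBlocks_smul, sub_eq_add_neg, fromBlocks_neg, fromBlocks_add, fromBlocks_inj]
    refine ⟨?_, ?_, ?_, ?_⟩ <;> match_scalars <;> (field_simp; try ring)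
end

section
/- Let N, m ∈ ℕ with m ≥ 1, let P be a symmetric (3N+6)×(3N+6) real matrix, set L = P·M_N and W = M_Nᵀ·P·M_N, and let P^A_∞ be the (3N+6+3m)-dimensional block matrix with top-left block P, (top, landmark-i) block L and (landmark-i, top) block Lᵀ for i = 1, …, m, and all (landmark-i, landmark-j) blocks equal to W. Let H be the 3m×(3N+6+3m) matrix whose i-th block row is Hⁱ = [0_{3,3}, I₃, 0_{3,3(N+i−1)}, −I₃, 0_{3,3(m−i)}]. Then H·P^A_∞ = 0. (This is the key identity in the proof of Theorem 2: the observation Jacobian annihilates the steady-state covariance.) -/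
open Matrix

/-- The key identity in the proof of Theorem 2: the observation Jacobian `H`, whose `i`-th
block row is `[0₃, I₃, 0_{3,3(N+i−1)}, −I₃, 0_{3,3(m−i)}]`, annihilates the steady-state
covariance `P^A_∞` (with top-left block `P`, `(top, landmark-i)` blocks `L = P·M_N`,
`(landmark-i, top)` blocks `Lᵀ`, and all landmark-landmark blocks `W = M_Nᵀ·P·M_N`). -/
theorem obs_jacobian_annihilates_steady_state (N m : ℕ) (hm : 1 ≤ m)
    (P : Matrix (Fin (3 * N + 6)) (Fin (3 * N + 6)) ℝ) (hP : Pᵀ = P)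
    (L : Matrix (Fin (3 * N + 6)) (Fin 3) ℝ) (hL : L = P * MN N)
    (W : Matrix (Fin 3) (Fin 3) ℝ) (hW : W = (MN N)ᵀ * P * MN N)
    (PA : Matrix (Fin (3 * N + 6) ⊕ (Fin m × Fin 3)) (Fin (3 * N + 6) ⊕ (Fin m × Fin 3)) ℝ)
    (hPA : PA = Matrix.fromBlocks P
        (Matrix.of fun i x => L i x.2)
        (Matrix.of fun x i => Lᵀ x.2 i)
        (Matrix.of fun x y => W x.2 y.2))
    (H : Matrix (Fin m × Fin 3) (Fin (3 * N + 6) ⊕ (Fin m × Fin 3)) ℝ)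
    (hH : H = Matrix.of fun x j =>
        Sum.elim (fun i => (MN N)ᵀ x.2 i)
          (fun y => if x.1 = y.1 then (-1 : Matrix (Fin 3) (Fin 3) ℝ) x.2 y.2 else 0) j) :
    H * PA = 0 := by
  subst hL hW hPA hH
  have collapse : ∀ (i : Fin m) (a : Fin 3) (g : Fin 3 → ℝ),
      (∑ x : Fin m, ∑ c : Fin 3, if i = x then -(if a = c then g c else 0) else 0) = -g a := by
    intro i a g
    rw [Finset.sum_comm]
    simp [Finset.sum_ite_eq]
  ext ⟨i, a⟩ j
  have key : ∀ b : Fin (3 * N + 6), ∑ x : Fin (3 * N + 6), MN N x a * P x b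
      = ∑ x : Fin (3 * N + 6), P b x * MN N x a :=
    fun b => Finset.sum_congr rfl fun x _ => by
      rw [mul_comm]; congr 1; exact (congrFun (congrFun hP x) b).symm
  cases j with
  | inl k =>
    simp only [Matrix.mul_apply, Fintype.sum_sum_type, Matrix.fromBlocks_apply₁₁,
      Matrix.fromBlocks_apply₂₁, Matrix.of_apply, Sum.elim_inl, Sum.elim_inr,
      Matrix.transpose_apply, Matrix.zero_apply, Matrix.neg_apply, Matrix.one_apply]
    rw [Fintype.sum_prod_type]
    simp only [ite_mul, zero_mul, neg_mul, one_mul]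
    rw [collapse i a, key k]
    ring
  | inr y =>
    simp only [Matrix.mul_apply, Fintype.sum_sum_type, Matrix.fromBlocks_apply₁₂,
      Matrix.fromBlocks_apply₂₂, Matrix.of_apply, Sum.elim_inl, Sum.elim_inr,
      Matrix.transpose_apply, Matrix.zero_apply, Matrix.neg_apply, Matrix.one_apply]
    rw [Fintype.sum_prod_type]
    simp only [ite_mul, zero_mul, neg_mul, one_mul]
    rw [collapse i a, add_neg_eq_zero]
    simp only [Finset.mul_sum, Finset.sum_mul]
    rw [Finset.sum_comm]
    exact Finset.sum_congr rfl fun x _ => Finset.sum_congr rfl fun z _ => by ring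
end

section
/- Let n, q, r ∈ ℕ, let P_A be an n×n real symmetric matrix, H a q×n real matrix with H·P_A = 0, A an n×r real matrix, Φ an r×r positive definite real matrix, Ψ a q×q positive definite real matrix, and l a positive integer. Set ΔP = A·Φ·Aᵀ and P₀ = P_A + ΔP. Then (1/l)·Ψ + H·P₀·Hᵀ and Φ^{-1} + l·(HA)ᵀ·Ψ^{-1}·(HA) are invertible, and P₀ − P₀·Hᵀ·((1/l)·Ψ + H·P₀·Hᵀ)^{-1}·H·P₀ = P_A + A·(Φ^{-1} + l·(HA)ᵀ·Ψ^{-1}·(HA))^{-1}·Aᵀ. (This is the chain of identities in the proof of Theorem 2 expressing the updated covariance after l observations.) -/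
open Matrix

lemma posDef_smul_aux {m : Type*} [Fintype m] {M : Matrix m m ℝ} (hM : M.PosDef)
    {c : ℝ} (hc : 0 < c) : (c • M).PosDef := by
  refine ⟨?_, fun x hx => ?_⟩
  · unfold Matrix.IsHermitian
    rw [conjTranspose_smul, hM.isHermitian]
    simp
  · have := hM.2 hx
    have e : (x.sum fun i xi => x.sum fun j xj => star xi * (c • M) i j * xj)
        = c * (x.sum fun i xi => x.sum fun j xj => star xi * M i j * xj) := by
      simp only [Finsupp.mul_sum, Matrix.smul_apply, smul_eq_mul, star_trivial]
      exact Finsupp.sum_congr fun i _ => Finsupp.sum_congr fun j _ => by ring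
    rw [e]; exact mul_pos hc this

lemma posSemidef_smul_aux {m : Type*} [Fintype m] {M : Matrix m m ℝ} (hM : M.PosSemidef)
    {c : ℝ} (hc : 0 ≤ c) : (c • M).PosSemidef := by
  refine ⟨?_, fun x => ?_⟩
  · unfold Matrix.IsHermitian
    rw [conjTranspose_smul, hM.isHermitian]
    simp
  · have := hM.2 x
    have e : (x.sum fun i xi => x.sum fun j xj => star xi * (c • M) i j * xj)
        = c * (x.sum fun i xi => x.sum fun j xj => star xi * M i j * xj) := by
      simp only [Finsupp.mul_sum, Matrix.smul_apply, smul_eq_mul, star_trivial]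
      exact Finsupp.sum_congr fun i _ => Finsupp.sum_congr fun j _ => by ring
    rw [e]; exact mul_nonneg hc this

/-- The chain of identities in the proof of Theorem 2: with `H·P_A = 0`, `ΔP = A·Φ·Aᵀ` and
`P₀ = P_A + ΔP`, the matrices `(1/l)·Ψ + H·P₀·Hᵀ` and `Φ⁻¹ + l·(HA)ᵀΨ⁻¹(HA)` are invertible
and the updated covariance after `l` observations satisfies
`P₀ − P₀Hᵀ((1/l)Ψ + HP₀Hᵀ)⁻¹HP₀ = P_A + A(Φ⁻¹ + l(HA)ᵀΨ⁻¹(HA))⁻¹Aᵀ`. -/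
theorem covariance_update_identity (n q r : ℕ)
    (PA : Matrix (Fin n) (Fin n) ℝ) (hPA : PAᵀ = PA)
    (H : Matrix (Fin q) (Fin n) ℝ) (hHPA : H * PA = 0)
    (A : Matrix (Fin n) (Fin r) ℝ)
    (Φ : Matrix (Fin r) (Fin r) ℝ) (hΦ : Φ.PosDef)
    (Ψ : Matrix (Fin q) (Fin q) ℝ) (hΨ : Ψ.PosDef)
    (l : ℕ) (hl : 0 < l)
    (P₀ : Matrix (Fin n) (Fin n) ℝ) (hP₀ : P₀ = PA + A * Φ * Aᵀ) :
    IsUnit ((1 / (l : ℝ)) • Ψ + H * P₀ * Hᵀ) ∧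
    IsUnit (Φ⁻¹ + (l : ℝ) • ((H * A)ᵀ * Ψ⁻¹ * (H * A))) ∧
    P₀ - P₀ * Hᵀ * ((1 / (l : ℝ)) • Ψ + H * P₀ * Hᵀ)⁻¹ * (H * P₀)
      = PA + A * (Φ⁻¹ + (l : ℝ) • ((H * A)ᵀ * Ψ⁻¹ * (H * A)))⁻¹ * Aᵀ := by
  have hl' : (0:ℝ) < l := by exact_mod_cast hl
  set B := H * A with hB
  have hPAH : PA * Hᵀ = 0 := by
    have := congrArg Matrix.transpose hHPA
    simpa [Matrix.transpose_mul, hPA] using this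
  have hHP₀ : H * P₀ = B * Φ * Aᵀ := by
    rw [hP₀, Matrix.mul_add, hHPA, zero_add, hB]
    simp [Matrix.mul_assoc]
  have hP₀H : P₀ * Hᵀ = A * Φ * Bᵀ := by
    rw [hP₀, Matrix.add_mul, hPAH, zero_add, hB]
    simp [Matrix.transpose_mul, Matrix.mul_assoc]
  have hHP₀H : H * P₀ * Hᵀ = B * Φ * Bᵀ := by
    rw [hHP₀, hB]
    simp [Matrix.transpose_mul, Matrix.mul_assoc]
  have hBT : Bᵀ = Bᴴ := (Matrix.conjTranspose_eq_transpose_of_trivial _).symm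
  -- positive definiteness of the two matrices
  have hS : ((1 / (l : ℝ)) • Ψ + B * Φ * Bᵀ).PosDef := by
    refine Matrix.PosDef.add_posSemidef (posDef_smul_aux hΨ (by positivity)) ?_
    rw [hBT]
    exact hΦ.posSemidef.mul_mul_conjTranspose_same B
  have hT : (Φ⁻¹ + (l : ℝ) • (Bᵀ * Ψ⁻¹ * B)).PosDef := by
    refine Matrix.PosDef.add_posSemidef hΦ.inv ?_
    refine posSemidef_smul_aux ?_ (le_of_lt hl')
    have : Bᵀ * Ψ⁻¹ * B = Bᴴ * Ψ⁻¹ * B := by rw [hBT]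
    rw [this]
    exact hΨ.inv.posSemidef.conjTranspose_mul_mul_same B
  have hSu : IsUnit ((1 / (l : ℝ)) • Ψ + H * P₀ * Hᵀ) := by rw [hHP₀H]; exact hS.isUnit
  have hTu : IsUnit (Φ⁻¹ + (l : ℝ) • (Bᵀ * Ψ⁻¹ * B)) := hT.isUnit
  refine ⟨hSu, hTu, ?_⟩
  -- Woodbury identity
  have hΦdet : IsUnit Φ.det := (Matrix.isUnit_iff_isUnit_det _).mp hΦ.isUnit
  have hΦinv2 : Φ⁻¹⁻¹ = Φ := Matrix.nonsing_inv_nonsing_inv _ hΦdet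
  have hΦiu : IsUnit Φ⁻¹ := hΦ.inv.isUnit
  have hCu : IsUnit ((l:ℝ) • Ψ⁻¹) := (posDef_smul_aux hΨ.inv hl').isUnit
  have : Invertible ((l:ℝ)) := invertibleOfNonzero (ne_of_gt hl')
  have hΨdet : IsUnit Ψ.det := (Matrix.isUnit_iff_isUnit_det _).mp hΨ.isUnit
  have hCinv : ((l:ℝ) • Ψ⁻¹)⁻¹ = (1 / (l:ℝ)) • Ψ := by
    refine Matrix.inv_eq_left_inv ?_
    rw [Matrix.smul_mul, Matrix.mul_smul, smul_smul, Matrix.mul_nonsing_inv _ hΨdet,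
      one_div, inv_mul_cancel₀ (ne_of_gt hl'), one_smul]
  have hUCV : Bᵀ * ((l:ℝ) • Ψ⁻¹) * B = (l:ℝ) • (Bᵀ * Ψ⁻¹ * B) := by
    rw [Matrix.mul_smul, Matrix.smul_mul]
  have hACu : IsUnit (((l:ℝ) • Ψ⁻¹)⁻¹ + B * Φ⁻¹⁻¹ * Bᵀ) := by
    rw [hCinv, hΦinv2]; exact hS.isUnit
  have hW := Matrix.add_mul_mul_inv_eq_sub Φ⁻¹ Bᵀ ((l:ℝ) • Ψ⁻¹) B hΦiu hCu hACu
  rw [hUCV, hCinv, hΦinv2] at hW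
  rw [hHP₀H, hHP₀, hP₀H, hP₀, hW]
  simp [Matrix.mul_sub, Matrix.sub_mul, Matrix.mul_assoc, add_sub_assoc]
end

section
/- Let n, q ∈ ℕ, let P and ΔP be symmetric n×n real matrices with P positive semidefinite, let Ψ be a q×q positive definite real matrix, and let H be a q×n real matrix with H·ΔP = 0. Then H·P·Hᵀ + Ψ is invertible, H·(P + ΔP)·Hᵀ + Ψ = H·P·Hᵀ + Ψ, the Kalman gains agree: (P + ΔP)·Hᵀ·(H·(P + ΔP)·Hᵀ + Ψ)^{-1} = P·Hᵀ·(H·P·Hᵀ + Ψ)^{-1} =: K, and the updated covariances satisfy (I − K·H)·(P + ΔP) = (I − K·H)·P + ΔP. (This is the induction step in the proof of Theorem 3 showing RI-EKF is invariant under stochastic identity transformations: the extra covariance ΔP passes through the Kalman update unchanged.) -/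
open Matrix

/-- The induction step in the proof of Theorem 3 (RI-EKF is invariant under stochastic
identity transformations): if `H·ΔP = 0` with `P` positive semidefinite, `ΔP` symmetric and
`Ψ` positive definite, then the innovation covariance is unchanged, both Kalman gains agree,
and the extra covariance `ΔP` passes through the Kalman update unchanged. -/
theorem kalman_update_passes_deltaP (n q : ℕ)
    (P ΔP : Matrix (Fin n) (Fin n) ℝ)
    (hP : P.PosSemidef) (hΔP : ΔPᵀ = ΔP)
    (Ψ : Matrix (Fin q) (Fin q) ℝ) (hΨ : Ψ.PosDef)
    (H : Matrix (Fin q) (Fin n) ℝ) (hHΔP : H * ΔP = 0) :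
    IsUnit (H * P * Hᵀ + Ψ) ∧
    H * (P + ΔP) * Hᵀ + Ψ = H * P * Hᵀ + Ψ ∧
    (P + ΔP) * Hᵀ * (H * (P + ΔP) * Hᵀ + Ψ)⁻¹ = P * Hᵀ * (H * P * Hᵀ + Ψ)⁻¹ ∧
    (1 - (P * Hᵀ * (H * P * Hᵀ + Ψ)⁻¹) * H) * (P + ΔP)
      = (1 - (P * Hᵀ * (H * P * Hᵀ + Ψ)⁻¹) * H) * P + ΔP := by
  have hΔPH : ΔP * Hᵀ = 0 := by
    calc ΔP * Hᵀ = (H * ΔPᵀ)ᵀ := by simp [Matrix.transpose_mul]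
    _ = 0 := by rw [hΔP, hHΔP]; simp
  have hpsd : (H * P * Hᵀ).PosSemidef := by
    have := hP.mul_mul_conjTranspose_same H
    simpa [mul_assoc] using this
  have hpd : (H * P * Hᵀ + Ψ).PosDef := Matrix.PosDef.posSemidef_add hpsd hΨ
  have hu : IsUnit (H * P * Hᵀ + Ψ) := hpd.isUnit
  have heq : H * (P + ΔP) * Hᵀ + Ψ = H * P * Hᵀ + Ψ := by
    rw [Matrix.mul_add, Matrix.add_mul, hHΔP, Matrix.zero_mul, add_zero]
  refine ⟨hu, heq, ?_, ?_⟩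
  · rw [heq, Matrix.add_mul, hΔPH, add_zero]
  · rw [Matrix.mul_add, Matrix.sub_mul, Matrix.sub_mul, Matrix.one_mul,
      Matrix.mul_assoc _ H ΔP, hHΔP, Matrix.mul_zero]
    rw [Matrix.one_mul]; abel
end
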